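/- arXiv:1910.01958 — 3 statements merged into one kernel-verified Lean document; each statement's English description precedes it below -/
import Mathlib

section
/- Let R > 1 and let A(R) = {z ∈ ℂ : 1/R < |z| < R} with closure cl(A(R)) = {z ∈ ℂ : 1/R ≤ |z| ≤ R}. Let L, M, N : ℂ → ℝ be continuous on cl(A(R)) and suppose: (i) N(z) + |z|²·L(z) = 0 for all z ∈ cl(A(R)); (ii) M(z) = 0 whenever |z| = R or |z| = 1/R; (iii) the function F(z) = ((|z|²·L(z) − N(z)) − 2i·|z|·M(z))² is continuous on cl(A(R)) and holomorphic on A(R); (iv) L is not identically zero on cl(A(R)). Then there exists a constant A₀ > 0 such that M(z) = 0 for all z ∈ cl(A(R)), and either N(z) = A₀ and L(z) = −A₀/|z|² for all z ∈ cl(A(R)), or N(z) = −A₀ and L(z) = A₀/|z|² for all z ∈ cl(A(R)). -/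
/-! The imaginary part of `F = ((|z|²L - N) - 2i|z|M)²` is `-4(|z|²L - N)|z|M`, which vanishes on
the boundary circles. The maximum modulus principle for `exp (∓iF)` gives `Im F = 0` on the closed
annulus, so by the open mapping theorem `F` is a real constant `w`. Since `|z|²L - N = -2N`, this
says `NM = 0` and `4N² - 4|z|²M² = w` pointwise. Where `L ≠ 0` also `N ≠ 0`, hence `M = 0` there
and `w > 0`; so `M` vanishes everywhere, `N² = w/4`, and connectedness of the annulus fixes the
sign of `N`. -/

open Complex Set

lemma image_polar_prod_univ {s : Set ℝ} (hs : ∀ r ∈ s, 0 ≤ r) :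
    (fun p : ℝ × ℝ => (p.1 : ℂ) * exp (p.2 * I)) '' (s ×ˢ univ) = norm ⁻¹' s := by
  ext z
  constructor
  · rintro ⟨⟨r, θ⟩, ⟨hr, -⟩, rfl⟩
    simpa [norm_exp_ofReal_mul_I, abs_of_nonneg (hs r hr)] using hr
  · exact fun hz => ⟨(‖z‖, arg z), ⟨hz, mem_univ _⟩, norm_mul_exp_arg_mul_I z⟩

lemma IsPreconnected.norm_preimage {s : Set ℝ} (hs : IsPreconnected s) :
    IsPreconnected (norm ⁻¹' s : Set ℂ) := by
  have hs' : IsPreconnected (s ∩ Ici 0) :=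
    (hs.ordConnected.inter ordConnected_Ici).isPreconnected
  have : (norm ⁻¹' s : Set ℂ) = norm ⁻¹' (s ∩ Ici 0) := by
    ext z; simp [norm_nonneg]
  rw [this, ← image_polar_prod_univ fun r hr => hr.2]
  exact (hs'.prod isPreconnected_univ).image _ (by fun_prop)

lemma closure_norm_preimage_Ioo {a b : ℝ} (ha : 0 ≤ a) (hab : a < b) :
    closure (norm ⁻¹' Ioo a b : Set ℂ) = norm ⁻¹' Icc a b := by
  refine (closure_minimal (preimage_mono Ioo_subset_Icc_self)
    (isClosed_Icc.preimage continuous_norm)).antisymm ?_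
  have h := image_closure_subset_closure_image (s := Ioo a b ×ˢ univ)
    (f := fun p : ℝ × ℝ => (p.1 : ℂ) * exp (p.2 * I)) (by fun_prop)
  rwa [closure_prod_eq, closure_Ioo hab.ne, closure_univ,
    image_polar_prod_univ fun r hr => ha.trans hr.1,
    image_polar_prod_univ fun r hr => ha.trans hr.1.le] at h

lemma frontier_norm_preimage_Ioo_subset (a b : ℝ) :
    frontier (norm ⁻¹' Ioo a b : Set ℂ) ⊆ norm ⁻¹' {a, b} := by
  rw [(isOpen_Ioo.preimage continuous_norm).frontier_eq]
  rintro z ⟨hz, hz'⟩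
  have := closure_minimal (preimage_mono Ioo_subset_Icc_self)
    (isClosed_Icc.preimage continuous_norm) hz
  simp only [mem_preimage, mem_Icc, mem_Ioo, mem_insert_iff, mem_singleton_iff] at this hz' ⊢
  grind

lemma Complex.im_le_of_forall_mem_frontier_im_le {f : ℂ → ℂ} {U : Set ℂ}
    (hU : Bornology.IsBounded U) (hf : DiffContOnCl ℂ f U) {C : ℝ}
    (hC : ∀ z ∈ frontier U, (f z).im ≤ C) {z : ℂ} (hz : z ∈ closure U) : (f z).im ≤ C := by
  have hnorm (w : ℂ) : ‖(exp ∘ (-I • f)) w‖ = Real.exp (f w).im := by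
    simp [norm_exp, mul_re]
  have h := norm_le_of_forall_mem_frontier_norm_le hU
    (differentiable_exp.comp_diffContOnCl (hf.const_smul (-I)))
    (fun w hw => (hnorm w).trans_le (Real.exp_le_exp.2 (hC w hw))) hz
  rwa [hnorm, Real.exp_le_exp] at h

lemma DiffContOnCl.exists_eq_ofReal_on_closure {f : ℂ → ℂ} {U : Set ℂ}
    (hU : Bornology.IsBounded U) (hUo : IsOpen U) (hUc : IsConnected U)
    (hf : DiffContOnCl ℂ f U) (hfr : ∀ z ∈ frontier U, (f z).im = 0) :
    ∃ w : ℝ, ∀ z ∈ closure U, f z = w := by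
  have him (z) (hz : z ∈ closure U) : (f z).im = 0 := by
    refine le_antisymm (im_le_of_forall_mem_frontier_im_le hU hf (fun w hw => (hfr w hw).le) hz)
      (neg_nonpos.1 ?_)
    simpa using im_le_of_forall_mem_frontier_im_le hU hf.neg (C := 0)
      (fun w hw => by simp [hfr w hw]) hz
  obtain ⟨w, hw⟩ := (hf.differentiableOn.analyticOnNhd hUo).eq_const_add_im_mul_I_of_re_eq_const
    (fun z hz => him z (subset_closure hz)) hUo hUc
  exact ⟨w, EqOn.of_subset_closure (fun z hz => by simpa using hw z hz) hf.continuousOn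
    continuousOn_const subset_closure subset_rfl⟩

lemma coeff_relations_of_sq_eq_ofReal {r l m n w : ℝ} (hr : 0 < r) (hmin : n + r ^ 2 * l = 0)
    (hw : (((r ^ 2 * l - n : ℝ) : ℂ) - 2 * I * (r : ℂ) * (m : ℂ)) ^ 2 = w) :
    n * m = 0 ∧ 4 * n ^ 2 - 4 * r ^ 2 * m ^ 2 = w := by
  rw [show r ^ 2 * l - n = -2 * n by linarith] at hw
  have hre := congrArg re hw
  have him := congrArg im hw
  simp only [sq, mul_re, mul_im, sub_re, sub_im, ofReal_re, ofReal_im, I_re, I_im] at hre him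
  norm_num at hre him
  refine ⟨(mul_eq_zero.1 ?_).resolve_left hr.ne', by linarith⟩
  linear_combination him / 8

lemma forall_eq_zero_and_sq_eq {α : Type*} {S : Set α} {n m r : α → ℝ} {w : ℝ}
    (h : ∀ z ∈ S, n z * m z = 0 ∧ 4 * n z ^ 2 - 4 * r z ^ 2 * m z ^ 2 = w)
    {z₀ : α} (hz₀ : z₀ ∈ S) (hn₀ : n z₀ ≠ 0) : ∀ z ∈ S, m z = 0 ∧ n z ^ 2 = n z₀ ^ 2 := by
  have hw : w = 4 * n z₀ ^ 2 := by
    obtain ⟨hnm, hw⟩ := h z₀ hz₀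
    rw [(mul_eq_zero.1 hnm).resolve_left hn₀] at hw
    linarith
  intro z hz
  obtain ⟨hnm, hwz⟩ := h z hz
  have hm : m z = 0 := by
    by_contra hm
    rw [(mul_eq_zero.1 hnm).resolve_right hm] at hwz
    nlinarith [sq_pos_of_ne_zero hn₀, sq_pos_of_ne_zero hm, sq_nonneg (r z)]
  exact ⟨hm, by rw [hm] at hwz; linarith⟩

theorem stmt_1_general (R : ℝ) (hR : 1 < R) (L M N : ℂ → ℝ)
    (hNc : ContinuousOn N {z : ℂ | 1 / R ≤ ‖z‖ ∧ ‖z‖ ≤ R})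
    (hmin : ∀ z ∈ {z : ℂ | 1 / R ≤ ‖z‖ ∧ ‖z‖ ≤ R},
      N z + (‖z‖) ^ 2 * L z = 0)
    (hbdry : ∀ z : ℂ, (‖z‖ = R ∨ ‖z‖ = 1 / R) → M z = 0)
    (hFc : ContinuousOn
      (fun z : ℂ => ((((‖z‖) ^ 2 * L z - N z : ℝ) : ℂ)
        - 2 * Complex.I * (‖z‖ : ℂ) * (M z : ℂ)) ^ 2)
      {z : ℂ | 1 / R ≤ ‖z‖ ∧ ‖z‖ ≤ R})
    (hFd : DifferentiableOn ℂ
      (fun z : ℂ => ((((‖z‖) ^ 2 * L z - N z : ℝ) : ℂ)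
        - 2 * Complex.I * (‖z‖ : ℂ) * (M z : ℂ)) ^ 2)
      {z : ℂ | 1 / R < ‖z‖ ∧ ‖z‖ < R})
    (hLne : ∃ z ∈ {z : ℂ | 1 / R ≤ ‖z‖ ∧ ‖z‖ ≤ R}, L z ≠ 0) :
    ∃ A₀ : ℝ, 0 < A₀ ∧
      (∀ z ∈ {z : ℂ | 1 / R ≤ ‖z‖ ∧ ‖z‖ ≤ R}, M z = 0) ∧
      ((∀ z ∈ {z : ℂ | 1 / R ≤ ‖z‖ ∧ ‖z‖ ≤ R},
          N z = A₀ ∧ L z = -A₀ / (‖z‖) ^ 2) ∨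
       (∀ z ∈ {z : ℂ | 1 / R ≤ ‖z‖ ∧ ‖z‖ ≤ R},
          N z = -A₀ ∧ L z = A₀ / (‖z‖) ^ 2)) := by
  have hR₀ : 0 < 1 / R := by positivity
  have hR₁ : 1 / R < 1 := (div_lt_one (by linarith)).2 hR
  have hclosure := closure_norm_preimage_Ioo hR₀.le (hR₁.trans hR)
  have hpos (z : ℂ) (hz : z ∈ norm ⁻¹' Icc (1 / R) R) : 0 < ‖z‖ := hR₀.trans_le hz.1
  obtain ⟨w, hw⟩ := DiffContOnCl.exists_eq_ofReal_on_closure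
    (isBounded_iff_forall_norm_le.2 ⟨R, fun z hz => hz.2.le⟩)
    (isOpen_Ioo.preimage continuous_norm)
    ⟨⟨1, by simpa only [mem_preimage, norm_one] using ⟨hR₁, hR⟩⟩, isPreconnected_Ioo.norm_preimage⟩
    ⟨hFd, hclosure ▸ hFc⟩
    (fun z hz => by
      rw [hbdry z (frontier_norm_preimage_Ioo_subset _ _ hz).symm]
      simp only [ofReal_zero, mul_zero, sub_zero, ← ofReal_pow, ofReal_im])
  rw [hclosure] at hw
  have key (z : ℂ) (hz : z ∈ norm ⁻¹' Icc (1 / R) R) :=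
    coeff_relations_of_sq_eq_ofReal (hpos z hz) (hmin z hz) (hw z hz)
  obtain ⟨z₀, hz₀, hL₀⟩ := hLne
  have hN₀ : N z₀ ≠ 0 := fun h => hL₀ (by simpa [h, (hpos z₀ hz₀).ne'] using hmin z₀ hz₀)
  have hMN := forall_eq_zero_and_sq_eq key hz₀ hN₀
  have hL (z : ℂ) (hz : z ∈ norm ⁻¹' Icc (1 / R) R) : L z = -N z / ‖z‖ ^ 2 := by
    rw [eq_div_iff (pow_pos (hpos z hz) 2).ne']
    linarith [hmin z hz]
  refine ⟨|N z₀|, abs_pos.2 hN₀, fun z hz => (hMN z hz).1, ?_⟩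
  obtain h | h := isPreconnected_Icc.norm_preimage.eq_or_eq_neg_of_sq_eq hNc continuousOn_const
    (fun z hz => (hMN z hz).2.trans (sq_abs _).symm) (fun _ => (abs_pos.2 hN₀).ne')
  · exact Or.inl fun z hz => ⟨h hz, by rw [hL z hz, h hz]⟩
  · exact Or.inr fun z hz => ⟨h hz, by rw [hL z hz, h hz, Pi.neg_apply, neg_neg]⟩

/-- Lemma 1 of the paper, analytic content. `L, M, N` are the coefficients
of the second fundamental form of a free boundary minimal annulus: minimality gives
`N + |z|²L = 0`, the free boundary condition gives `M = 0` on the boundary circles, and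
`((|z|²L − N) − 2i|z|M)²` is holomorphic. Then `M ≡ 0` and, up to the choice of unit normal,
`N = A₀` and `L = −A₀/|z|²` for a positive constant `A₀`. -/
theorem stmt_1 (R : ℝ) (hR : 1 < R) (L M N : ℂ → ℝ)
    (hLc : ContinuousOn L {z : ℂ | 1 / R ≤ ‖z‖ ∧ ‖z‖ ≤ R})
    (hMc : ContinuousOn M {z : ℂ | 1 / R ≤ ‖z‖ ∧ ‖z‖ ≤ R})
    (hNc : ContinuousOn N {z : ℂ | 1 / R ≤ ‖z‖ ∧ ‖z‖ ≤ R})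
    (hmin : ∀ z ∈ {z : ℂ | 1 / R ≤ ‖z‖ ∧ ‖z‖ ≤ R},
      N z + (‖z‖) ^ 2 * L z = 0)
    (hbdry : ∀ z : ℂ, (‖z‖ = R ∨ ‖z‖ = 1 / R) → M z = 0)
    (hFc : ContinuousOn
      (fun z : ℂ => ((((‖z‖) ^ 2 * L z - N z : ℝ) : ℂ)
        - 2 * Complex.I * (‖z‖ : ℂ) * (M z : ℂ)) ^ 2)
      {z : ℂ | 1 / R ≤ ‖z‖ ∧ ‖z‖ ≤ R})
    (hFd : DifferentiableOn ℂ
      (fun z : ℂ => ((((‖z‖) ^ 2 * L z - N z : ℝ) : ℂ)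
        - 2 * Complex.I * (‖z‖ : ℂ) * (M z : ℂ)) ^ 2)
      {z : ℂ | 1 / R < ‖z‖ ∧ ‖z‖ < R})
    (hLne : ∃ z ∈ {z : ℂ | 1 / R ≤ ‖z‖ ∧ ‖z‖ ≤ R}, L z ≠ 0) :
    ∃ A₀ : ℝ, 0 < A₀ ∧
      (∀ z ∈ {z : ℂ | 1 / R ≤ ‖z‖ ∧ ‖z‖ ≤ R}, M z = 0) ∧
      ((∀ z ∈ {z : ℂ | 1 / R ≤ ‖z‖ ∧ ‖z‖ ≤ R},
          N z = A₀ ∧ L z = -A₀ / (‖z‖) ^ 2) ∨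
       (∀ z ∈ {z : ℂ | 1 / R ≤ ‖z‖ ∧ ‖z‖ ≤ R},
          N z = -A₀ ∧ L z = A₀ / (‖z‖) ^ 2)) :=
  stmt_1_general R hR L M N hNc hmin hbdry hFc hFd hLne
end

section
/- There exists a unique real number t with t > 1 such that t² + 1 = (t² − 1)·ln t. -/
/-!
For `t > 1` the equation reads `log t = 1 + 2 / (t² - 1)`: the left side increases strictly
and the right side decreases strictly, so their difference has at most one zero, and it
changes sign on `[2, e²]` since `log 2 < 1` and `2 / (e⁴ - 1) < 1`.
-/

open Real Set

noncomputable def catenoidDefect (t : ℝ) : ℝ := log t - 1 - 2 / (t ^ 2 - 1)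

lemma catenoidDefect_eq_zero_iff {t : ℝ} (ht : 1 < t) :
    catenoidDefect t = 0 ↔ t ^ 2 + 1 = (t ^ 2 - 1) * log t := by
  have hpos : 0 < t ^ 2 - 1 := by nlinarith
  have hscaled : catenoidDefect t * (t ^ 2 - 1) = (t ^ 2 - 1) * log t - (t ^ 2 + 1) := by
    rw [catenoidDefect]
    field_simp
    ring
  rw [← mul_eq_zero_iff_right hpos.ne', hscaled, sub_eq_zero, eq_comm]

lemma strictMonoOn_catenoidDefect : StrictMonoOn catenoidDefect (Ioi 1) := by
  intro a (ha : 1 < a) b (hb : 1 < b) hab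
  have hlog : log a < log b := log_lt_log (by linarith) hab
  have hfrac : 2 / (b ^ 2 - 1) < 2 / (a ^ 2 - 1) :=
    div_lt_div_of_pos_left two_pos (by nlinarith) (by nlinarith)
  simp only [catenoidDefect]
  linarith

lemma continuousOn_catenoidDefect : ContinuousOn catenoidDefect (Ioi 1) := by
  unfold catenoidDefect
  fun_prop (disch := intro x (hx : 1 < x); nlinarith)

lemma catenoidDefect_two_neg : catenoidDefect 2 < 0 := by
  have := log_two_lt_d9
  norm_num [catenoidDefect]
  linarith

lemma catenoidDefect_exp_two_pos : 0 < catenoidDefect (exp 2) := by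
  have h3 : 3 ≤ exp 2 := by linarith [add_one_le_exp (2 : ℝ)]
  have hfrac : 2 / (exp 2 ^ 2 - 1) < 1 := by
    rw [div_lt_one (by nlinarith)]
    nlinarith
  rw [catenoidDefect, log_exp]
  linarith

/-- There is a unique real `t > 1` with `t² + 1 = (t² − 1)·ln t`.
This equation determines the outer conformal radius of the critical catenoid. -/
theorem stmt_4 : ∃! t : ℝ, 1 < t ∧ t ^ 2 + 1 = (t ^ 2 - 1) * Real.log t := by
  have h2e : (2 : ℝ) ≤ exp 2 := by linarith [add_one_le_exp (2 : ℝ)]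
  have hsub : Icc 2 (exp 2) ⊆ Ioi 1 := fun _ hx => one_lt_two.trans_le hx.1
  obtain ⟨t, ht, hzero⟩ : ∃ t ∈ Icc 2 (exp 2), catenoidDefect t = 0 :=
    intermediate_value_Icc h2e (continuousOn_catenoidDefect.mono hsub)
      ⟨catenoidDefect_two_neg.le, catenoidDefect_exp_two_pos.le⟩
  have ht1 : 1 < t := hsub ht
  refine ⟨t, ⟨ht1, (catenoidDefect_eq_zero_iff ht1).mp hzero⟩, ?_⟩
  rintro s ⟨hs1, hs⟩
  exact strictMonoOn_catenoidDefect.injOn hs1 ht1 <| by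
    rw [(catenoidDefect_eq_zero_iff hs1).mpr hs, hzero]
end

section
/- Let U ⊆ ℂ be open and let g : ℂ → ℂ be holomorphic on U. Then the function φ(z) = ln(1 + |g(z)|²) is C² on U and its Laplacian satisfies Δφ(z) = 4·|g′(z)|² / (1 + |g(z)|²)² for every z ∈ U. -/
/-!
Along a direction `v`, `φ = log (1 + ‖f‖²)` has second derivative
`2 (‖∂ᵥf‖² + ⟪f, ∂ᵥ²f⟫) / Q - (2 ⟪f, ∂ᵥf⟫ / Q)²` with `Q = 1 + ‖f‖²`. For holomorphic `g` one has
`∂ᵥg = g' v` and `∂ᵥ²g = g'' v²`; summing over `v = 1` and `v = i`, the `g''` terms cancel because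
`i² = -1`, and `⟪g, g'⟫² + ⟪g, g' i⟫² = |g|² |g'|²`, leaving
`4 |g'|² / Q - 4 |g|² |g'|² / Q² = 4 |g'|² / Q²`.
-/

/-- The Laplacian `Δu = ∂²u/∂x² + ∂²u/∂y²` of a function `u : ℂ → ℝ`, with `ℂ ≅ ℝ²`
via the basis `1, i`. -/
noncomputable def laplacian (u : ℂ → ℝ) (z : ℂ) : ℝ :=
  fderiv ℝ (fun w => fderiv ℝ u w 1) z 1 +
    fderiv ℝ (fun w => fderiv ℝ u w Complex.I) z Complex.I

open Filter Topology InnerProductSpace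

section
variable {E F : Type*} [NormedAddCommGroup E] [NormedSpace ℝ E]
  [NormedAddCommGroup F] [InnerProductSpace ℝ F]

theorem ContDiffOn.log_one_add_norm_sq {n : WithTop ℕ∞} {f : E → F} {s : Set E}
    (hf : ContDiffOn ℝ n f s) : ContDiffOn ℝ n (fun x => Real.log (1 + ‖f x‖ ^ 2)) s :=
  (contDiffOn_const.add (hf.norm_sq ℝ)).log fun _ _ => by positivity

theorem fderiv_log_one_add_norm_sq_apply {f : E → F} {x : E} (hf : DifferentiableAt ℝ f x)
    (v : E) :
    fderiv ℝ (fun x => Real.log (1 + ‖f x‖ ^ 2)) x v =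
      2 * ⟪f x, fderiv ℝ f x v⟫_ℝ / (1 + ‖f x‖ ^ 2) := by
  rw [((hf.hasFDerivAt.norm_sq.const_add 1).log (by positivity)).fderiv]
  simp only [smul_apply, ContinuousLinearMap.comp_apply, coe_innerSL_apply,
    nsmul_eq_mul, Nat.cast_ofNat, smul_eq_mul]
  ring

theorem fderiv_fderiv_log_one_add_norm_sq_apply {f : E → F} {x v : E}
    (hf : ∀ᶠ w in 𝓝 x, DifferentiableAt ℝ f w)
    (hfv : DifferentiableAt ℝ (fun w => fderiv ℝ f w v) x) :
    fderiv ℝ (fun w => fderiv ℝ (fun x => Real.log (1 + ‖f x‖ ^ 2)) w v) x v =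
      2 * (‖fderiv ℝ f x v‖ ^ 2 + ⟪f x, fderiv ℝ (fun w => fderiv ℝ f w v) x v⟫_ℝ) /
          (1 + ‖f x‖ ^ 2) - (2 * ⟪f x, fderiv ℝ f x v⟫_ℝ / (1 + ‖f x‖ ^ 2)) ^ 2 := by
  have hfirst : (fun w => fderiv ℝ (fun x => Real.log (1 + ‖f x‖ ^ 2)) w v) =ᶠ[𝓝 x]
      fun w => 2 * ⟪f w, fderiv ℝ f w v⟫_ℝ * (1 + ‖f w‖ ^ 2)⁻¹ :=
    hf.mono fun w hw => (fderiv_log_one_add_norm_sq_apply hw v).trans (div_eq_mul_inv _ _)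
  have hfx := hf.self_of_nhds.hasFDerivAt
  have hprod : HasFDerivAt (fun w => 2 * ⟪f w, fderiv ℝ f w v⟫_ℝ * (1 + ‖f w‖ ^ 2)⁻¹) _ x :=
    ((hfx.inner ℝ hfv.hasFDerivAt).const_mul 2).mul
      ((hasDerivAt_inv (by positivity)).comp_hasFDerivAt x (hfx.norm_sq.const_add 1))
  rw [hfirst.fderiv_eq, hprod.fderiv]
  simp only [add_apply, smul_apply,
    ContinuousLinearMap.comp_apply, ContinuousLinearMap.prod_apply, fderivInnerCLM_apply,
    coe_innerSL_apply, inner_self_eq_norm_sq_to_K, neg_smul, smul_neg, neg_apply,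
    nsmul_eq_mul, Nat.cast_ofNat, smul_eq_mul, Real.ringHom_apply]
  field_simp
  ring

end

namespace Complex

theorem inner_sq_add_inner_mul_I_sq (a b : ℂ) :
    ⟪a, b⟫_ℝ ^ 2 + ⟪a, b * I⟫_ℝ ^ 2 = ‖a‖ ^ 2 * ‖b‖ ^ 2 := by
  simp only [Complex.inner, Complex.sq_norm, normSq_apply, mul_re, mul_im, conj_re, conj_im,
    I_re, I_im]
  ring

theorem fderiv_real_apply {g : ℂ → ℂ} {z : ℂ} (hg : DifferentiableAt ℂ g z) (v : ℂ) :
    fderiv ℝ g z v = deriv g z * v := by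
  rw [hg.fderiv_restrictScalars ℝ, ContinuousLinearMap.coe_restrictScalars', fderiv_eq_smul_deriv,
    smul_eq_mul, mul_comm]

theorem fderiv_real_fderiv_real_apply {g : ℂ → ℂ} {z : ℂ} (hg : AnalyticAt ℂ g z) (v : ℂ) :
    DifferentiableAt ℝ (fun w => fderiv ℝ g w v) z ∧
      fderiv ℝ (fun w => fderiv ℝ g w v) z v = deriv (deriv g) z * v * v := by
  have hfirst : (fun w => fderiv ℝ g w v) =ᶠ[𝓝 z] fun w => deriv g w * v :=
    hg.eventually_analyticAt.mono fun w hw => fderiv_real_apply hw.differentiableAt v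
  have hg' : DifferentiableAt ℂ (fun w => deriv g w * v) z :=
    hg.deriv.differentiableAt.mul_const v
  refine ⟨hfirst.differentiableAt_iff.mpr (hg'.restrictScalars ℝ), ?_⟩
  rw [hfirst.fderiv_eq, fderiv_real_apply hg', deriv_mul_const hg.deriv.differentiableAt]

end Complex

theorem laplacian_log_one_add_norm_sq {g : ℂ → ℂ} {z : ℂ} (hg : AnalyticAt ℂ g z) :
    laplacian (fun z => Real.log (1 + ‖g z‖ ^ 2)) z =
      4 * ‖deriv g z‖ ^ 2 / (1 + ‖g z‖ ^ 2) ^ 2 := by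
  have hdiff : ∀ᶠ w in 𝓝 z, DifferentiableAt ℝ g w :=
    hg.eventually_analyticAt.mono fun w hw => hw.differentiableAt.restrictScalars ℝ
  have hsecond (v : ℂ) := Complex.fderiv_real_fderiv_real_apply hg v
  unfold laplacian
  rw [fderiv_fderiv_log_one_add_norm_sq_apply hdiff (hsecond 1).1,
    fderiv_fderiv_log_one_add_norm_sq_apply hdiff (hsecond Complex.I).1,
    (hsecond 1).2, (hsecond Complex.I).2,
    Complex.fderiv_real_apply hg.differentiableAt, Complex.fderiv_real_apply hg.differentiableAt]
  have hinner := Complex.inner_sq_add_inner_mul_I_sq (g z) (deriv g z)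
  simp only [mul_one, mul_assoc _ Complex.I Complex.I, Complex.I_mul_I, mul_neg, inner_neg_right,
    norm_mul, Complex.norm_I]
  field_simp
  linear_combination -4 * hinner

/-- For `g` holomorphic on an open set `U ⊆ ℂ`, the function
`φ(z) = ln(1 + |g(z)|²)` is `C²` on `U` and satisfies
`Δφ = 4|g′|²/(1 + |g|²)²` on `U`. -/
theorem stmt_9 (U : Set ℂ) (hU : IsOpen U) (g : ℂ → ℂ)
    (hg : DifferentiableOn ℂ g U) :
    ContDiffOn ℝ 2 (fun z => Real.log (1 + ‖g z‖ ^ 2)) U ∧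
      ∀ z ∈ U,
        laplacian (fun z => Real.log (1 + ‖g z‖ ^ 2)) z =
          4 * ‖deriv g z‖ ^ 2 / (1 + ‖g z‖ ^ 2) ^ 2 :=
  ⟨((hg.contDiffOn hU).restrict_scalars ℝ).log_one_add_norm_sq,
    fun z hz => laplacian_log_one_add_norm_sq (hg.analyticAt (hU.mem_nhds hz))⟩
end
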